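/- Let m ≥ 2, φ : ℤ/mℤ → ℂ, Ψ : ℝ → ℂ a 1-periodic function with absolutely convergent Fourier series Ψ(α) = Σ_{h∈ℤ} Ψ̂(h) e(−hα). Then Σ_{0≤n<m} φ̂(n) Ψ(n/m) = √m · Σ_{h∈ℤ} Ψ̂(h) φ(h), where φ̂ is the normalized discrete Fourier transform of φ and φ is extended m-periodically to ℤ. -/

import Mathlib

/-!
Expanding `Ψ (n / m)` in its Fourier series and exchanging the finite sum over `n` with the
absolutely convergent sum over `h` reduces the identity to discrete Fourier inversion,
`∑ n, φ̂ n * e (-h n / m) = √m * φ h`, which is the orthogonality of the `m`-th roots of unity.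
-/

open scoped BigOperators

noncomputable def eAdd (m : ℕ) (t : ℤ) : ℂ := Complex.exp (2 * Real.pi * Complex.I * t / m)

noncomputable def dft (m : ℕ) (φ : ℤ → ℂ) (h : ℤ) : ℂ :=
  (1 / Real.sqrt m) * ∑ x ∈ Finset.range m, φ x * eAdd m (h * x)

noncomputable def supNorm (m : ℕ) (f : ℤ → ℂ) : ℝ :=
  (((Finset.range m).sup fun x => ‖f (x : ℤ)‖₊ : NNReal) : ℝ)

open Finset

theorem IsPrimitiveRoot.geom_sum_zpow {K : Type*} [Field K] {ζ : K} {k : ℕ}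
    (hζ : IsPrimitiveRoot ζ k) (l : ℤ) :
    ∑ i ∈ range k, (ζ ^ l) ^ i = if (k : ℤ) ∣ l then (k : K) else 0 := by
  split_ifs with hkl
  · simp [(hζ.zpow_eq_one_iff_dvd l).2 hkl]
  · have hne : ζ ^ l ≠ 1 := mt (hζ.zpow_eq_one_iff_dvd l).1 hkl
    refine eq_zero_of_ne_zero_of_mul_left_eq_zero (sub_ne_zero.2 hne.symm) ?_
    rw [mul_neg_geom_sum, ← zpow_natCast, ← zpow_mul, mul_comm, zpow_mul, zpow_natCast,
      hζ.pow_eq_one, one_zpow, sub_self]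

theorem Function.Periodic.sum_range_ite_dvd_sub {M : Type*} [AddCommMonoid M] {φ : ℤ → M}
    {m : ℕ} (hm : 0 < m) (hφ : Function.Periodic φ m) (h : ℤ) :
    ∑ x ∈ range m, (if (m : ℤ) ∣ x - h then φ x else 0) = φ h := by
  have hm' : (0 : ℤ) < m := by exact_mod_cast hm
  have hr : ((h % m).toNat : ℤ) = h % m := Int.toNat_of_nonneg (Int.emod_nonneg h hm'.ne')
  have hr_lt : h % m < m := Int.emod_lt_of_pos h hm'
  have hdvd : ∀ x ∈ range m, (m : ℤ) ∣ x - h ↔ (h % m).toNat = x := by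
    intro x hx
    have hx : (x : ℤ) < m := by exact_mod_cast mem_range.1 hx
    rw [← Int.modEq_iff_dvd, Int.ModEq, Int.emod_eq_of_lt (by positivity) hx]
    omega
  rw [sum_congr rfl fun x hx => if_congr (hdvd x hx) rfl rfl, sum_ite_eq,
    if_pos (mem_range.2 (by omega)), hr, Int.emod_def, mul_comm]
  exact hφ.sub_int_mul_eq (h / m)

theorem eAdd_eq_zpow (m : ℕ) (t : ℤ) :
    eAdd m t = Complex.exp (2 * Real.pi * Complex.I / m) ^ t := by
  rw [eAdd, ← Complex.exp_int_mul]
  ring_nf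

theorem norm_eAdd (m : ℕ) (t : ℤ) : ‖eAdd m t‖ = 1 := by
  simp [eAdd, Complex.norm_exp]

theorem sum_dft_mul_eAdd_neg {m : ℕ} (hm : 0 < m) {φ : ℤ → ℂ} (hφ : Function.Periodic φ m)
    (h : ℤ) : ∑ n ∈ range m, dft m φ n * eAdd m (-(h * n)) = Real.sqrt m * φ h := by
  set ζ := Complex.exp (2 * Real.pi * Complex.I / m)
  have hζ : IsPrimitiveRoot ζ m := Complex.isPrimitiveRoot_exp m hm.ne'
  have hζ0 : ζ ≠ 0 := Complex.exp_ne_zero _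
  have hsqrt : (Real.sqrt m : ℂ) ^ 2 = m := by
    rw [← Complex.ofReal_pow, Real.sq_sqrt (Nat.cast_nonneg m), Complex.ofReal_natCast]
  have hsqrt0 : (Real.sqrt m : ℂ) ≠ 0 := by
    exact_mod_cast (Real.sqrt_pos.2 (Nat.cast_pos.2 hm)).ne'
  calc ∑ n ∈ range m, dft m φ n * eAdd m (-(h * n))
      = (1 / Real.sqrt m) * ∑ x ∈ range m, φ x * ∑ n ∈ range m, (ζ ^ ((x : ℤ) - h)) ^ n := by
        simp only [dft, eAdd_eq_zpow, mul_sum, sum_mul]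
        rw [sum_comm]
        refine sum_congr rfl fun x _ => sum_congr rfl fun n _ => ?_
        rw [← zpow_natCast, ← zpow_mul, mul_assoc, mul_assoc, ← zpow_add₀ hζ0]
        ring_nf
    _ = (1 / Real.sqrt m) * ∑ x ∈ range m, (if (m : ℤ) ∣ x - h then (m : ℂ) * φ x else 0) := by
        simp only [hζ.geom_sum_zpow, mul_ite, mul_zero, mul_comm]
    _ = Real.sqrt m * φ h := by
        rw [Function.Periodic.sum_range_ite_dvd_sub (φ := fun x => (m : ℂ) * φ x) hm
          (fun x => by simp only [hφ x]) h]
        field_simp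
        rw [hsqrt]

/-- Smoothed completion / Plancherel identity (3.7). -/
theorem stmt16 (m : ℕ) (hm : 2 ≤ m) (φ : ℤ → ℂ)
    (hper : ∀ n : ℤ, φ (n + m) = φ n) (Ψ : ℝ → ℂ) (Ψc : ℤ → ℂ)
    (habs : Summable fun h : ℤ => ‖Ψc h‖)
    (hrep : ∀ α : ℝ,
      Ψ α = ∑' h : ℤ, Ψc h * Complex.exp (-(2 * Real.pi * Complex.I * h * α))) :
    ∑ n ∈ Finset.range m, dft m φ n * Ψ ((n : ℝ) / m)
      = Real.sqrt m * ∑' h : ℤ, Ψc h * φ h := by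
  have hΨ : ∀ n : ℕ, Ψ ((n : ℝ) / m) = ∑' h : ℤ, Ψc h * eAdd m (-(h * n)) := fun n => by
    rw [hrep]
    refine tsum_congr fun h => ?_
    rw [eAdd]
    push_cast
    ring_nf
  have hsum : ∀ n : ℕ, Summable fun h : ℤ => Ψc h * eAdd m (-(h * n)) := fun n =>
    Summable.of_norm (by simpa only [norm_mul, norm_eAdd, mul_one] using habs)
  calc ∑ n ∈ range m, dft m φ n * Ψ ((n : ℝ) / m)
      = ∑' h : ℤ, ∑ n ∈ range m, dft m φ n * (Ψc h * eAdd m (-(h * n))) := by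
        simp only [hΨ, ← tsum_mul_left]
        exact (Summable.tsum_finsetSum fun n _ => (hsum n).mul_left _).symm
    _ = ∑' h : ℤ, Ψc h * (Real.sqrt m * φ h) := by
        refine tsum_congr fun h => ?_
        simp only [mul_left_comm _ (Ψc h), ← mul_sum, sum_dft_mul_eAdd_neg (by omega) hper]
    _ = Real.sqrt m * ∑' h : ℤ, Ψc h * φ h := by
        rw [← tsum_mul_left]
        exact tsum_congr fun h => mul_left_comm _ _ _
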